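/- arXiv:1802.08444 — 4 statements merged into one kernel-verified Lean document; each statement's English description precedes it below -/
import Mathlib

section
/- If N = p₁·p₂ is a product of two distinct odd primes, then φ(N) = λ(N) · gcd(N − 1, λ(N)). -/
/-!
With `a = p₁ - 1` and `b = p₂ - 1` we have `φ(N) = a b`, `λ(N) = lcm a b` by the Chinese remainder
theorem, and `N - 1 = a b + a + b`. The latter is `≡ b (mod a)` and `≡ a (mod b)`, so by
distributivity of `gcd` over `lcm` its gcd with `lcm a b` is `gcd a b`, and `a b = lcm a b * gcd a b`.
-/

/-- The Carmichael function: the exponent of the multiplicative group `(ZMod n)ˣ`. -/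
noncomputable def carmichael (n : ℕ) : ℕ := Monoid.exponent (ZMod n)ˣ

namespace Nat

theorem gcd_lcm_eq_lcm_gcd (a b c : ℕ) : gcd c (lcm a b) = lcm (gcd c a) (gcd c b) := by
  rcases eq_or_ne a 0 with rfl | ha
  · simp [lcm_eq_left_iff_dvd.2 (gcd_dvd_left c b)]
  rcases eq_or_ne b 0 with rfl | hb
  · simp [lcm_eq_right_iff_dvd.2 (gcd_dvd_left c a)]
  rcases eq_or_ne c 0 with rfl | hc
  · simp
  apply eq_of_factorization_eq (gcd_ne_zero_left hc)
    (lcm_ne_zero (gcd_ne_zero_left hc) (gcd_ne_zero_left hc))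
  intro p
  simp only [factorization_gcd hc (lcm_ne_zero ha hb), factorization_lcm ha hb,
    factorization_lcm (gcd_ne_zero_left hc) (gcd_ne_zero_left hc), factorization_gcd hc ha,
    factorization_gcd hc hb, Finsupp.inf_apply, Finsupp.sup_apply]
  exact inf_sup_left _ _ _

theorem gcd_mul_add_add_lcm (a b : ℕ) : gcd (a * b + a + b) (lcm a b) = gcd a b := by
  have hgcd_left : gcd (a * b + a + b) a = gcd a b := by
    rw [show a * b + a + b = b + a * (b + 1) by ring, gcd_add_mul_left_left, gcd_comm]
  have hgcd_right : gcd (a * b + a + b) b = gcd a b := by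
    rw [show a * b + a + b = a + b * (a + 1) by ring, gcd_add_mul_left_left]
  rw [gcd_lcm_eq_lcm_gcd, hgcd_left, hgcd_right, lcm_self]

end Nat

theorem carmichael_mul_of_coprime {m n : ℕ} (h : m.Coprime n) :
    carmichael (m * n) = (carmichael m).lcm (carmichael n) :=
  (Monoid.exponent_eq_of_mulEquiv <|
    (Units.mapEquiv (ZMod.chineseRemainder h).toMulEquiv).trans MulEquiv.prodUnits).trans
    Monoid.exponent_prod

theorem carmichael_prime {p : ℕ} (hp : p.Prime) : carmichael p = p - 1 := by
  have : Fact p.Prime := ⟨hp⟩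
  rw [carmichael, IsCyclic.exponent_eq_card, Nat.card_eq_fintype_card, ZMod.card_units_eq_totient,
    Nat.totient_prime hp]

theorem totient_eq_carmichael_mul_gcd_general (p₁ p₂ N : ℕ) (hp₁ : p₁.Prime) (hp₂ : p₂.Prime)
    (hne : p₁ ≠ p₂) (hN : N = p₁ * p₂) :
    Nat.totient N = carmichael N * Nat.gcd (N - 1) (carmichael N) := by
  subst hN
  have hcop : p₁.Coprime p₂ := (Nat.coprime_primes hp₁ hp₂).2 hne
  have hN_sub_one : p₁ * p₂ - 1 = (p₁ - 1) * (p₂ - 1) + (p₁ - 1) + (p₂ - 1) := by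
    zify [hp₁.one_le, hp₂.one_le, one_le_mul hp₁.one_le hp₂.one_le]
    ring
  rw [Nat.totient_mul hcop, Nat.totient_prime hp₁, Nat.totient_prime hp₂,
    carmichael_mul_of_coprime hcop, carmichael_prime hp₁, carmichael_prime hp₂, hN_sub_one,
    Nat.gcd_mul_add_add_lcm, Nat.lcm_mul_gcd]

theorem totient_eq_carmichael_mul_gcd (p₁ p₂ N : ℕ) (hp₁ : p₁.Prime) (hp₂ : p₂.Prime)
    (hodd₁ : Odd p₁) (hodd₂ : Odd p₂) (hne : p₁ ≠ p₂) (hN : N = p₁ * p₂) :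
    Nat.totient N = carmichael N * Nat.gcd (N - 1) (carmichael N) :=
  totient_eq_carmichael_mul_gcd_general p₁ p₂ N hp₁ hp₂ hne hN
end

section
/- If N = p₁p₂ with p₁, p₂ distinct primes, p₁−1 = g·q₁, p₂−1 = g·q₂ where g = gcd(p₁−1, p₂−1), then gcd(N−1, λ(N)) = g, where λ(N) = g·q₁·q₂. -/
/-! Write `a = g q₁`, `b = g q₂` with `g = gcd a b` and `q₁, q₂` coprime. Then `lcm a b = g q₁ q₂`
and `(a + 1)(b + 1) - 1 = g (g q₁ q₂ + q₁ + q₂)`, and the second factor is coprime to `q₁ q₂`: modulo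
`q₁` it is `q₂`, modulo `q₂` it is `q₁`. Hence the gcd is exactly `g`. -/

namespace Nat

theorem lcm_eq_gcd_mul_mul {a b q₁ q₂ : ℕ} (h₁ : a = gcd a b * q₁) (h₂ : b = gcd a b * q₂) :
    lcm a b = gcd a b * q₁ * q₂ := by
  set g := gcd a b with hg
  rcases g.eq_zero_or_pos with hg0 | hg0
  · rw [hg0, zero_mul] at h₁
    simp [h₁, hg0]
  · apply Nat.eq_of_mul_eq_mul_left hg0
    rw [hg, gcd_mul_lcm, ← hg, h₁, h₂]
    ring

theorem Coprime.coprime_mul_mul_add_add {q₁ q₂ : ℕ} (h : Coprime q₁ q₂) (k : ℕ) :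
    Coprime (k * (q₁ * q₂) + q₁ + q₂) (q₁ * q₂) := by
  have h₁ : Coprime (k * (q₁ * q₂) + q₁ + q₂) q₁ := by
    rw [show k * (q₁ * q₂) + q₁ + q₂ = q₂ + q₁ * (k * q₂ + 1) by ring, coprime_add_mul_left_left]
    exact h.symm
  have h₂ : Coprime (k * (q₁ * q₂) + q₁ + q₂) q₂ := by
    rw [show k * (q₁ * q₂) + q₁ + q₂ = q₁ + q₂ * (k * q₁ + 1) by ring, coprime_add_mul_left_left]
    exact h
  exact h₁.mul_right h₂

end Nat

theorem gcd_pred_lcm_eq_general (p₁ p₂ N g q₁ q₂ : ℕ) (hp₁ : p₁.Prime) (hp₂ : p₂.Prime)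
    (hN : N = p₁ * p₂) (hg : g = Nat.gcd (p₁ - 1) (p₂ - 1))
    (hq₁ : p₁ - 1 = g * q₁) (hq₂ : p₂ - 1 = g * q₂) :
    Nat.lcm (p₁ - 1) (p₂ - 1) = g * q₁ * q₂ ∧
      Nat.gcd (N - 1) (Nat.lcm (p₁ - 1) (p₂ - 1)) = g := by
  subst hg
  have hN₁ : N - 1 = (p₁ - 1) * (p₂ - 1) + (p₁ - 1) + (p₂ - 1) := by
    obtain ⟨a, rfl⟩ := Nat.exists_eq_add_one_of_ne_zero hp₁.ne_zero
    obtain ⟨b, rfl⟩ := Nat.exists_eq_add_one_of_ne_zero hp₂.ne_zero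
    rw [hN, Nat.add_sub_cancel, Nat.add_sub_cancel]
    ring_nf
    omega
  exact ⟨Nat.lcm_eq_gcd_mul_mul hq₁ hq₂, hN₁ ▸ Nat.gcd_mul_add_add_lcm _ _⟩

theorem gcd_pred_lcm_eq (p₁ p₂ N g q₁ q₂ : ℕ) (hp₁ : p₁.Prime) (hp₂ : p₂.Prime)
    (hne : p₁ ≠ p₂) (hN : N = p₁ * p₂) (hg : g = Nat.gcd (p₁ - 1) (p₂ - 1))
    (hq₁ : p₁ - 1 = g * q₁) (hq₂ : p₂ - 1 = g * q₂) :
    Nat.lcm (p₁ - 1) (p₂ - 1) = g * q₁ * q₂ ∧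
      Nat.gcd (N - 1) (Nat.lcm (p₁ - 1) (p₂ - 1)) = g :=
  gcd_pred_lcm_eq_general p₁ p₂ N g q₁ q₂ hp₁ hp₂ hN hg hq₁ hq₂
end

section
/- Let A < B be positive integers and suppose D divides B, D divides A + x, D > B^α and |x| < B^{2α−1}/2 for some real α > 1/2. Writing a' = (A+x)/D and b' = B/D, we have |A/B − a'/b'| < 1/(2·b'²); hence a'/b' is a convergent of the continued fraction expansion of A/B. -/
/-!
Since `a'/b' = (A + x)/B`, the error `|A/B - a'/b'|` is exactly `|x|/B`. From `D b' = B` and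
`D > B^α` we get `b' < B^(1-α)`, so `2 b'^2 |x| < B^(2-2α) · B^(2α-1) = B`, which is the
Legendre bound `|x|/B < 1/(2 b'^2)`. Legendre's theorem applies to the reduced form of `a'/b'`,
whose denominator is at most `b'`.
-/

theorem Real.exists_convs_eq_div_of_abs_sub_lt {ξ : ℝ} {a b : ℤ} (hb : 0 < b)
    (h : |ξ - a / b| < 1 / (2 * (b : ℝ) ^ 2)) :
    ∃ n, (GenContFract.of ξ).convs n = a / b := by
  set q : ℚ := a / b
  have hq : (q : ℝ) = a / b := by push_cast [q]; rfl
  have hden : (q.den : ℝ) ≤ b := by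
    have hdvd : (q.den : ℤ) ∣ b := by simpa [Rat.divInt_eq_div] using Rat.den_dvd a b
    exact_mod_cast Int.le_of_dvd hb hdvd
  have hq_approx : |ξ - q| < 1 / (2 * (q.den : ℝ) ^ 2) := by
    rw [hq]
    refine h.trans_le (one_div_le_one_div_of_le (by positivity) ?_)
    gcongr
  simpa [hq] using Real.exists_convs_eq_rat hq_approx

lemma lt_rpow_one_sub_of_rpow_lt {B D b α : ℝ} (hB : 0 < B) (hD : B ^ α < D) (hDb : D * b = B) :
    b < B ^ (1 - α) := by
  have hBα : 0 < B ^ α := Real.rpow_pos_of_pos hB α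
  have hb : b = B / D := eq_div_of_mul_eq (hBα.trans hD).ne' (by rw [mul_comm, hDb])
  rw [Real.rpow_sub hB, Real.rpow_one, hb]
  exact div_lt_div_of_pos_left hB hBα hD

lemma two_mul_sq_mul_lt_of_lt_rpow {B b y α : ℝ} (hB : 0 < B) (hb₀ : 0 ≤ b)
    (hb : b < B ^ (1 - α)) (hy₀ : 0 ≤ y) (hy : y < B ^ (2 * α - 1) / 2) :
    2 * b ^ 2 * y < B := by
  have hBpow : B ^ (1 - α) * B ^ (1 - α) * B ^ (2 * α - 1) = B := by
    rw [← Real.rpow_add hB, ← Real.rpow_add hB, show 1 - α + (1 - α) + (2 * α - 1) = 1 by ring,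
      Real.rpow_one]
  have hpos : 0 < B ^ (1 - α) := Real.rpow_pos_of_pos hB _
  calc 2 * b ^ 2 * y ≤ 2 * (B ^ (1 - α) * B ^ (1 - α)) * y := by
        rw [← sq]
        gcongr
    _ < 2 * (B ^ (1 - α) * B ^ (1 - α)) * (B ^ (2 * α - 1) / 2) := by gcongr
    _ = B ^ (1 - α) * B ^ (1 - α) * B ^ (2 * α - 1) := by ring
    _ = B := hBpow

lemma abs_div_sub_add_div (a x : ℝ) {B : ℝ} (hB : 0 < B) : |a / B - (a + x) / B| = |x| / B := by
  rw [div_sub_div_same, sub_add_cancel_left, abs_div, abs_neg, abs_of_pos hB]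

theorem approx_gcd_convergent_general (A B D x a' b' : ℤ) (α : ℝ)
    (hA : 0 < A) (hAB : A < B)
    (hD : (B : ℝ) ^ α < (D : ℝ))
    (hx : |(x : ℝ)| < (B : ℝ) ^ (2 * α - 1) / 2)
    (ha' : A + x = D * a') (hb' : B = D * b') :
    |(A : ℝ) / (B : ℝ) - (a' : ℝ) / (b' : ℝ)| < 1 / (2 * (b' : ℝ) ^ 2) ∧
      ∃ n : ℕ, (GenContFract.of ((A : ℝ) / (B : ℝ))).convs n = (a' : ℝ) / (b' : ℝ) := by
  have hB : (0 : ℝ) < B := by exact_mod_cast hA.trans hAB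
  have hD₀ : (0 : ℝ) < D := (Real.rpow_pos_of_pos hB α).trans hD
  have hDb : (D : ℝ) * b' = B := by exact_mod_cast hb'.symm
  have hb₀ : (0 : ℝ) < b' := pos_of_mul_pos_right (hDb ▸ hB) hD₀.le
  have hfrac : (a' : ℝ) / b' = (A + x) / B := by
    rw [← hDb, show (A + x : ℝ) = D * a' by exact_mod_cast ha', mul_div_mul_left _ _ hD₀.ne']
  have happrox : |(A : ℝ) / B - a' / b'| < 1 / (2 * (b' : ℝ) ^ 2) := by
    rw [hfrac, abs_div_sub_add_div _ _ hB, div_lt_div_iff₀ hB (by positivity), one_mul, mul_comm]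
    exact two_mul_sq_mul_lt_of_lt_rpow hB hb₀.le (lt_rpow_one_sub_of_rpow_lt hB hD hDb)
      (abs_nonneg _) hx
  exact ⟨happrox, Real.exists_convs_eq_div_of_abs_sub_lt (by exact_mod_cast hb₀) happrox⟩

theorem approx_gcd_convergent (A B D x a' b' : ℤ) (α : ℝ)
    (hA : 0 < A) (hAB : A < B) (hDB : D ∣ B) (hDx : D ∣ A + x)
    (hα : 1 / 2 < α) (hα1 : α ≤ 1)
    (hD : (B : ℝ) ^ α < (D : ℝ))
    (hx : |(x : ℝ)| < (B : ℝ) ^ (2 * α - 1) / 2)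
    (ha' : A + x = D * a') (hb' : B = D * b') :
    |(A : ℝ) / (B : ℝ) - (a' : ℝ) / (b' : ℝ)| < 1 / (2 * (b' : ℝ) ^ 2) ∧
      ∃ n : ℕ, (GenContFract.of ((A : ℝ) / (B : ℝ))).convs n = (a' : ℝ) / (b' : ℝ) :=
  approx_gcd_convergent_general A B D x a' b' α hA hAB hD hx ha' hb'
end

section
/- Let N = p₁p₂ be a product of two distinct strong primes pᵢ = 2qᵢ+1 (qᵢ odd prime), and let r be the multiplicative order of 2 modulo N with N > 5. Let r' = r if r is odd and r' = r/2 otherwise. Then r' ∈ {1, q₁, q₂, q₁q₂}; moreover if r' is prime then 2r'+1 is one of p₁, p₂ and divides N. -/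
/-! By the Chinese remainder theorem `r = lcm(ord_{p₁} 2, ord_{p₂} 2)`, and by Fermat `ord_{pᵢ} 2`
divides `pᵢ - 1 = 2qᵢ`. Hence `r ∣ 2q₁q₂`, so `r' ∣ q₁q₂`; a prime divisor of `q₁q₂` is `q₁` or `q₂`. -/

theorem ZMod.orderOf_natCast_mul {m n : ℕ} (hmn : m.Coprime n) (a : ℕ) :
    orderOf (a : ZMod (m * n)) = (orderOf (a : ZMod m)).lcm (orderOf (a : ZMod n)) := by
  rw [← (ZMod.chineseRemainder hmn).toMulEquiv.orderOf_eq, Prod.orderOf]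
  simp

theorem ZMod.orderOf_two_dvd_of_prime_two_mul_add_one {q : ℕ} (hp : (2 * q + 1).Prime) :
    orderOf (2 : ZMod (2 * q + 1)) ∣ 2 * q := by
  have := Fact.mk hp
  have htwo : (2 : ZMod (2 * q + 1)) ≠ 0 := by
    intro h
    have h2 : 2 * q + 1 ∣ 2 := (ZMod.natCast_eq_zero_iff 2 _).mp (by exact_mod_cast h)
    have := Nat.le_of_dvd two_pos h2
    have := hp.two_le
    omega
  simpa using ZMod.orderOf_dvd_card_sub_one htwo

theorem Nat.dvd_prime_mul_prime {p q d : ℕ} (hp : p.Prime) (hq : q.Prime) (hd : d ∣ p * q) :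
    d = 1 ∨ d = p ∨ d = q ∨ d = p * q := by
  obtain ⟨a, b, ha, hb, rfl⟩ := Nat.dvd_mul.mp hd
  rcases (Nat.dvd_prime hp).mp ha with rfl | rfl <;>
    rcases (Nat.dvd_prime hq).mp hb with rfl | rfl <;> simp

theorem ite_odd_div_two_dvd_of_dvd_two_mul {r m : ℕ} (h : r ∣ 2 * m) :
    (if Odd r then r else r / 2) ∣ m := by
  split_ifs with hodd
  · exact hodd.coprime_two_right.dvd_of_dvd_mul_left h
  · obtain ⟨k, rfl⟩ := Nat.not_odd_iff_even.mp hodd |>.two_dvd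
    rw [Nat.mul_div_cancel_left k two_pos]
    exact Nat.dvd_of_mul_dvd_mul_left two_pos h

theorem order_of_two_strong_primes_general (p₁ p₂ q₁ q₂ N : ℕ)
    (hp₁ : p₁.Prime) (hp₂ : p₂.Prime) (hq₁ : q₁.Prime) (hq₂ : q₂.Prime)
    (hqne : q₁ ≠ q₂)
    (h₁ : p₁ = 2 * q₁ + 1) (h₂ : p₂ = 2 * q₂ + 1) (hN : N = p₁ * p₂)
    (r r' : ℕ) (hr : r = orderOf (2 : ZMod N))
    (hr' : r' = if Odd r then r else r / 2) :
    r' ∈ ({1, q₁, q₂, q₁ * q₂} : Set ℕ) ∧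
      (r'.Prime → (2 * r' + 1 = p₁ ∨ 2 * r' + 1 = p₂) ∧ (2 * r' + 1) ∣ N) := by
  subst h₁ h₂ hN
  have hcop : (2 * q₁ + 1).Coprime (2 * q₂ + 1) := (Nat.coprime_primes hp₁ hp₂).mpr (by omega)
  have hr_dvd : r ∣ 2 * (q₁ * q₂) := by
    have hcrt := ZMod.orderOf_natCast_mul hcop 2
    push_cast at hcrt
    rw [hr, hcrt]
    exact Nat.lcm_dvd
      ((ZMod.orderOf_two_dvd_of_prime_two_mul_add_one hp₁).trans ⟨q₂, by ring⟩)
      ((ZMod.orderOf_two_dvd_of_prime_two_mul_add_one hp₂).trans ⟨q₁, by ring⟩)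
  have hr'_cases : r' = 1 ∨ r' = q₁ ∨ r' = q₂ ∨ r' = q₁ * q₂ :=
    Nat.dvd_prime_mul_prime hq₁ hq₂ (hr' ▸ ite_odd_div_two_dvd_of_dvd_two_mul hr_dvd)
  refine ⟨by rcases hr'_cases with h | h | h | h <;> simp [h], fun hprime => ?_⟩
  rcases hr'_cases with rfl | rfl | rfl | rfl
  · exact absurd hprime Nat.not_prime_one
  · exact ⟨Or.inl rfl, dvd_mul_right _ _⟩
  · exact ⟨Or.inr rfl, dvd_mul_left _ _⟩
  · exact absurd hprime (Nat.not_prime_mul hq₁.ne_one hq₂.ne_one)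

theorem order_of_two_strong_primes (p₁ p₂ q₁ q₂ N : ℕ)
    (hp₁ : p₁.Prime) (hp₂ : p₂.Prime) (hq₁ : q₁.Prime) (hq₂ : q₂.Prime)
    (hoq₁ : Odd q₁) (hoq₂ : Odd q₂) (hqne : q₁ ≠ q₂)
    (h₁ : p₁ = 2 * q₁ + 1) (h₂ : p₂ = 2 * q₂ + 1) (hN : N = p₁ * p₂) (hN5 : 5 < N)
    (r r' : ℕ) (hr : r = orderOf (2 : ZMod N))
    (hr' : r' = if Odd r then r else r / 2) :
    r' ∈ ({1, q₁, q₂, q₁ * q₂} : Set ℕ) ∧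
      (r'.Prime → (2 * r' + 1 = p₁ ∨ 2 * r' + 1 = p₂) ∧ (2 * r' + 1) ∣ N) :=
  order_of_two_strong_primes_general p₁ p₂ q₁ q₂ N hp₁ hp₂ hq₁ hq₂ hqne h₁ h₂ hN r r' hr hr'
end
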